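/- arXiv:2603.20505 — 7 statements merged into one kernel-verified Lean document; each statement's English description precedes it below -/
import Mathlib

section
/- Let P = (R, F) be a ProbLog program, X : Finset ℕ an intervention set and x : ℕ → Bool an assignment; let R' be the sublist of R of clauses with head not in X and let Σ be the sum of the body lengths of the clauses of R'. Define the total size of a program as its number of facts plus its number of clauses plus its total number of body literals. Then the total size of S(P) equals (length F) + (card X) + (length R') + Σ, the total size of T(P) equals 2·(length F) + 2·(length R') + 2·Σ, and consequently the total size of S(P) is less than or equal to that of T(P) if and only if (card X) ≤ (length F) + (length R') + Σ, with strict inequality if and only if (card X) < (length F) + (length R') + Σ. -/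
/-- A clause: a head atom together with a body list of literals (atom, sign). -/
abbrev Clause (V : Type) := V × List (V × Bool)

/-- The probabilistic facts of the Twin Network transformation. -/
def twinFacts (X : Finset ℕ) (F : List (ℕ × ℝ)) : List ((ℕ ⊕ ℕ) × ℝ) :=
  F.flatMap fun f =>
    [(Sum.inl f.1, if f.1 ∈ X then 1 else f.2),
     (Sum.inr f.1, if f.1 ∈ X then 0 else f.2)]

/-- The clauses of the Twin Network transformation. -/
def twinClauses (X : Finset ℕ) (R : List (Clause ℕ)) : List (Clause (ℕ ⊕ ℕ)) :=
  (R.filter fun c => decide (c.1 ∉ X)).flatMap fun c =>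
    [(Sum.inl c.1, c.2.map fun l => ((Sum.inl l.1 : ℕ ⊕ ℕ), l.2)),
     (Sum.inr c.1, c.2.map fun l => ((Sum.inr l.1 : ℕ ⊕ ℕ), l.2))]

/-- The probabilistic facts of the SWIFT transformation. -/
noncomputable def swiftFacts (X : Finset ℕ) (x : ℕ → Bool) (F : List (ℕ × ℝ)) :
    List ((ℕ ⊕ ℕ) × ℝ) :=
  (F.map fun f => ((Sum.inl f.1 : ℕ ⊕ ℕ), f.2)) ++
    X.toList.map fun a => ((Sum.inr a : ℕ ⊕ ℕ), if x a then (1 : ℝ) else 0)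

/-- The clauses of the SWIFT transformation. -/
def swiftClauses (X : Finset ℕ) (R : List (Clause ℕ)) : List (Clause (ℕ ⊕ ℕ)) :=
  (R.filter fun c => decide (c.1 ∉ X)).map fun c =>
    ((Sum.inl c.1 : ℕ ⊕ ℕ),
      c.2.map fun l =>
        if l.1 ∈ X then ((Sum.inr l.1 : ℕ ⊕ ℕ), l.2) else ((Sum.inl l.1 : ℕ ⊕ ℕ), l.2))

/-- Total number of body literals of a clause list. -/
def bodySize {V : Type} (R : List (Clause V)) : ℕ := (R.map fun c => c.2.length).sum

/-- Total size of a program: number of facts plus number of clauses plus total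
number of body literals. -/
def totalSize {V : Type} (R : List (Clause V)) (F : List (V × ℝ)) : ℕ :=
  F.length + R.length + bodySize R

/-! Both transformations keep exactly the clauses whose head is not intervened on, and
rename atoms without changing any body length. SWIFT keeps one copy of everything and adds
one fact per intervened atom, whereas the twin network duplicates every fact and clause, so
the comparison of the two sizes is linear arithmetic in the counts. -/

section Size

variable {V W : Type}

@[simp]
lemma bodySize_cons (c : Clause V) (R : List (Clause V)) :
    bodySize (c :: R) = c.2.length + bodySize R := by
  simp [bodySize]

lemma bodySize_map_of_length_eq (R : List (Clause V)) (f : Clause V → Clause W)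
    (hf : ∀ c, (f c).2.length = c.2.length) : bodySize (R.map f) = bodySize R := by
  induction R with
  | nil => rfl
  | cons c R ih => simp [hf, ih]

lemma bodySize_flatMap_pair (R : List (Clause V)) (f g : Clause V → Clause W)
    (hf : ∀ c, (f c).2.length = c.2.length) (hg : ∀ c, (g c).2.length = c.2.length) :
    bodySize (R.flatMap fun c => [f c, g c]) = 2 * bodySize R := by
  induction R with
  | nil => rfl
  | cons c R ih =>
    simp only [List.flatMap_cons, List.cons_append, List.nil_append, bodySize_cons, hf, hg, ih]
    ring

lemma length_flatMap_pair {α β : Type*} (L : List α) (f g : α → β) :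
    (L.flatMap fun a => [f a, g a]).length = 2 * L.length := by
  induction L with
  | nil => rfl
  | cons a L ih =>
    simp only [List.flatMap_cons, List.cons_append, List.nil_append, List.length_cons, ih]
    ring

end Size

section Transformations

variable (X : Finset ℕ) (R : List (Clause ℕ))

lemma length_swiftFacts (x : ℕ → Bool) (F : List (ℕ × ℝ)) :
    (swiftFacts X x F).length = F.length + X.card := by
  simp [swiftFacts]

lemma length_twinFacts (F : List (ℕ × ℝ)) : (twinFacts X F).length = 2 * F.length :=
  length_flatMap_pair F _ _

lemma totalSize_swift (x : ℕ → Bool) (F : List (ℕ × ℝ)) :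
    totalSize (swiftClauses X R) (swiftFacts X x F)
      = F.length + X.card + (R.filter fun c => decide (c.1 ∉ X)).length
          + bodySize (R.filter fun c => decide (c.1 ∉ X)) := by
  rw [totalSize, length_swiftFacts, swiftClauses, List.length_map,
    bodySize_map_of_length_eq _ _ fun _ => List.length_map _]

lemma totalSize_twin (F : List (ℕ × ℝ)) :
    totalSize (twinClauses X R) (twinFacts X F)
      = 2 * F.length + 2 * (R.filter fun c => decide (c.1 ∉ X)).length
          + 2 * bodySize (R.filter fun c => decide (c.1 ∉ X)) := by
  rw [totalSize, length_twinFacts, twinClauses, length_flatMap_pair,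
    bodySize_flatMap_pair _ _ _ (fun _ => List.length_map _) fun _ => List.length_map _]

end Transformations

theorem swift_vs_twin_size_general (R : List (Clause ℕ)) (F : List (ℕ × ℝ))
    (X : Finset ℕ) (x : ℕ → Bool) :
    totalSize (swiftClauses X R) (swiftFacts X x F)
      = F.length + X.card + (R.filter fun c => decide (c.1 ∉ X)).length
          + bodySize (R.filter fun c => decide (c.1 ∉ X)) ∧
    totalSize (twinClauses X R) (twinFacts X F)
      = 2 * F.length + 2 * (R.filter fun c => decide (c.1 ∉ X)).length
          + 2 * bodySize (R.filter fun c => decide (c.1 ∉ X)) ∧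
    (totalSize (swiftClauses X R) (swiftFacts X x F)
        ≤ totalSize (twinClauses X R) (twinFacts X F)
      ↔ X.card ≤ F.length + (R.filter fun c => decide (c.1 ∉ X)).length
          + bodySize (R.filter fun c => decide (c.1 ∉ X))) ∧
    (totalSize (swiftClauses X R) (swiftFacts X x F)
        < totalSize (twinClauses X R) (twinFacts X F)
      ↔ X.card < F.length + (R.filter fun c => decide (c.1 ∉ X)).length
          + bodySize (R.filter fun c => decide (c.1 ∉ X))) := by
  rw [totalSize_swift, totalSize_twin]
  exact ⟨rfl, rfl, by omega, by omega⟩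

theorem swift_vs_twin_size (R : List (Clause ℕ)) (F : List (ℕ × ℝ))
    (hF : ∀ f ∈ F, 0 ≤ f.2 ∧ f.2 ≤ 1) (X : Finset ℕ) (x : ℕ → Bool) :
    totalSize (swiftClauses X R) (swiftFacts X x F)
      = F.length + X.card + (R.filter fun c => decide (c.1 ∉ X)).length
          + bodySize (R.filter fun c => decide (c.1 ∉ X)) ∧
    totalSize (twinClauses X R) (twinFacts X F)
      = 2 * F.length + 2 * (R.filter fun c => decide (c.1 ∉ X)).length
          + 2 * bodySize (R.filter fun c => decide (c.1 ∉ X)) ∧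
    (totalSize (swiftClauses X R) (swiftFacts X x F)
        ≤ totalSize (twinClauses X R) (twinFacts X F)
      ↔ X.card ≤ F.length + (R.filter fun c => decide (c.1 ∉ X)).length
          + bodySize (R.filter fun c => decide (c.1 ∉ X))) ∧
    (totalSize (swiftClauses X R) (swiftFacts X x F)
        < totalSize (twinClauses X R) (twinFacts X F)
      ↔ X.card < F.length + (R.filter fun c => decide (c.1 ∉ X)).length
          + bodySize (R.filter fun c => decide (c.1 ∉ X))) :=
  swift_vs_twin_size_general R F X x
end

section
/- Let P = (R, F) be a ProbLog program and X : Finset ℕ an intervention set, and let R' be the sublist of R of clauses with head not in X. In the primal graph of the clause list of the Twin Network transformation T(P) (a simple graph on ℕ ⊕ ℕ): (i) no vertex Sum.inl u is adjacent to any vertex Sum.inr v; (ii) Sum.inl u is adjacent to Sum.inl v if and only if u is adjacent to v in the primal graph of R'; (iii) Sum.inr u is adjacent to Sum.inr v if and only if u is adjacent to v in the primal graph of R'. Hence the primal graph of T(P) is the disjoint union of two copies of the primal graph of R'. -/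
/-- The atoms occurring in a clause: its head and the atoms of its body literals. -/
def clauseAtoms {V : Type} (c : Clause V) : List V := c.1 :: c.2.map Prod.fst

/-- The primal graph of a clause list: distinct atoms are adjacent iff they occur
together in some clause (head or body). -/
def primalGraph {V : Type} (R : List (Clause V)) : SimpleGraph V where
  Adj u v := u ≠ v ∧ ∃ c ∈ R, u ∈ clauseAtoms c ∧ v ∈ clauseAtoms c
  symm := by
    constructor
    rintro u v ⟨hne, c, hc, hu, hv⟩
    exact ⟨hne.symm, c, hc, hv, hu⟩
  loopless := by
    constructor
    rintro u ⟨hne, -⟩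
    exact hne rfl

/-! Up to order, the twin clauses are the clauses with head outside `X`, renamed along `Sum.inl`,
followed by the same clauses renamed along `Sum.inr`. The primal graph turns concatenation into
`⊔` and an injective renaming of atoms into `SimpleGraph.map`, and `G.map inl ⊔ G.map inr` is
the disjoint sum `G ⊕g G`. -/

namespace Clause

variable {V W : Type}

def map (f : V → W) (c : Clause V) : Clause W := (f c.1, c.2.map fun l => (f l.1, l.2))

theorem clauseAtoms_map (f : V → W) (c : Clause V) :
    clauseAtoms (c.map f) = (clauseAtoms c).map f := by
  simp [clauseAtoms, map, Function.comp_def]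

end Clause

section PrimalGraph

variable {V W : Type}

theorem primalGraph_congr {R₁ R₂ : List (Clause V)} (h : ∀ c, c ∈ R₁ ↔ c ∈ R₂) :
    primalGraph R₁ = primalGraph R₂ := by
  ext u v
  simp only [primalGraph, h]

theorem primalGraph_append (R₁ R₂ : List (Clause V)) :
    primalGraph (R₁ ++ R₂) = primalGraph R₁ ⊔ primalGraph R₂ := by
  ext u v
  simp only [primalGraph, SimpleGraph.sup_adj, List.mem_append]
  grind

theorem primalGraph_map (f : V ↪ W) (R : List (Clause V)) :
    primalGraph (R.map (Clause.map f)) = (primalGraph R).map f := by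
  ext a b
  simp only [SimpleGraph.map_adj, primalGraph, List.mem_map]
  constructor
  · rintro ⟨hab, _, ⟨c, hc, rfl⟩, ha, hb⟩
    rw [Clause.clauseAtoms_map, List.mem_map] at ha hb
    obtain ⟨u, hu, rfl⟩ := ha
    obtain ⟨v, hv, rfl⟩ := hb
    exact ⟨u, v, ⟨fun huv => hab (congrArg f huv), c, hc, hu, hv⟩, rfl, rfl⟩
  · rintro ⟨u, v, ⟨huv, c, hc, hu, hv⟩, rfl, rfl⟩
    rw [← List.mem_map_of_injective f.injective, ← Clause.clauseAtoms_map] at hu hv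
    exact ⟨f.injective.ne huv, _, ⟨c, hc, rfl⟩, hu, hv⟩

end PrimalGraph

theorem SimpleGraph.sum_eq_map_inl_sup_map_inr {V W : Type*} (G : SimpleGraph V)
    (H : SimpleGraph W) :
    G ⊕g H = G.map Function.Embedding.inl ⊔ H.map Function.Embedding.inr := by
  ext (a | a) (b | b) <;> simp

theorem mem_twinClauses_iff (X : Finset ℕ) (R : List (Clause ℕ)) (c : Clause (ℕ ⊕ ℕ)) :
    c ∈ twinClauses X R ↔ c ∈ (R.filter fun c => decide (c.1 ∉ X)).map (Clause.map .inl) ++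
      (R.filter fun c => decide (c.1 ∉ X)).map (Clause.map .inr) := by
  simp only [twinClauses, Clause.map, List.mem_flatMap, List.mem_cons,
    List.not_mem_nil, or_false, List.mem_append, List.mem_map]
  grind

theorem primalGraph_twinClauses (X : Finset ℕ) (R : List (Clause ℕ)) :
    primalGraph (twinClauses X R) =
      primalGraph (R.filter fun c => decide (c.1 ∉ X)) ⊕g
        primalGraph (R.filter fun c => decide (c.1 ∉ X)) := by
  rw [primalGraph_congr (mem_twinClauses_iff X R), primalGraph_append,
    SimpleGraph.sum_eq_map_inl_sup_map_inr]
  exact congrArg₂ _ (primalGraph_map Function.Embedding.inl _)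
    (primalGraph_map Function.Embedding.inr _)

theorem twin_primal_graph_decomposes_general (R : List (Clause ℕ))
    (X : Finset ℕ) :
    (∀ u v : ℕ, ¬ (primalGraph (twinClauses X R)).Adj (Sum.inl u) (Sum.inr v)) ∧
    (∀ u v : ℕ, (primalGraph (twinClauses X R)).Adj (Sum.inl u) (Sum.inl v)
      ↔ (primalGraph (R.filter fun c => decide (c.1 ∉ X))).Adj u v) ∧
    (∀ u v : ℕ, (primalGraph (twinClauses X R)).Adj (Sum.inr u) (Sum.inr v)
      ↔ (primalGraph (R.filter fun c => decide (c.1 ∉ X))).Adj u v) := by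
  rw [primalGraph_twinClauses]
  exact ⟨fun _ _ => by simp, fun _ _ => SimpleGraph.sum_adj_inl,
    fun _ _ => SimpleGraph.sum_adj_inr⟩

theorem twin_primal_graph_decomposes (R : List (Clause ℕ)) (F : List (ℕ × ℝ))
    (X : Finset ℕ) :
    (∀ u v : ℕ, ¬ (primalGraph (twinClauses X R)).Adj (Sum.inl u) (Sum.inr v)) ∧
    (∀ u v : ℕ, (primalGraph (twinClauses X R)).Adj (Sum.inl u) (Sum.inl v)
      ↔ (primalGraph (R.filter fun c => decide (c.1 ∉ X))).Adj u v) ∧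
    (∀ u v : ℕ, (primalGraph (twinClauses X R)).Adj (Sum.inr u) (Sum.inr v)
      ↔ (primalGraph (R.filter fun c => decide (c.1 ∉ X))).Adj u v) :=
  twin_primal_graph_decomposes_general R X
end

section
/- Let P = (R, F) be a ProbLog program, X : Finset ℕ an intervention set and x : ℕ → Bool an assignment, and define the projection π : ℕ ⊕ ℕ → ℕ by π (Sum.inl a) = a and π (Sum.inr a) = a. Then for every pair of atoms u, v that are adjacent in the primal graph of the clause list of the SWIFT transformation S(P), the atoms π u and π v are distinct and are adjacent in the primal graph of R. In other words, π maps the primal graph of S(P) edge-injectively into the primal graph of the original program, so the intervention deletes but never adds dependencies. -/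
/-- The projection collapsing the two copies of an atom. -/
def proj : ℕ ⊕ ℕ → ℕ := Sum.elim id id

/-! The SWIFT transformation only renames atoms (atom `a` becomes its intervened copy
`Sum.inr a` when `a ∈ X`) and deletes the clauses with intervened heads. Renaming can only
create an edge between images of adjacent atoms, deleting clauses only removes edges, and
`proj` undoes the renaming. -/

section PrimalGraph

variable {V W : Type}

def clauseMap (f : V → W) (c : Clause V) : Clause W :=
  (f c.1, c.2.map (Prod.map f id))

lemma clauseAtoms_clauseMap (f : V → W) (c : Clause V) :
    clauseAtoms (clauseMap f c) = (clauseAtoms c).map f := by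
  simp [clauseAtoms, clauseMap]

lemma primalGraph_mono {R R' : List (Clause V)} (h : R ⊆ R') :
    primalGraph R ≤ primalGraph R' := by
  rintro u v ⟨hne, c, hc, hu, hv⟩
  exact ⟨hne, c, h hc, hu, hv⟩

lemma exists_adj_of_primalGraph_map_adj {f : V → W} {R : List (Clause V)} {u v : W}
    (h : (primalGraph (R.map (clauseMap f))).Adj u v) :
    ∃ a b, f a = u ∧ f b = v ∧ (primalGraph R).Adj a b := by
  obtain ⟨hne, _, hc', hu, hv⟩ := h
  obtain ⟨c, hc, rfl⟩ := List.mem_map.mp hc'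
  rw [clauseAtoms_clauseMap, List.mem_map] at hu hv
  obtain ⟨a, ha, rfl⟩ := hu
  obtain ⟨b, hb, rfl⟩ := hv
  exact ⟨a, b, rfl, rfl, fun hab => hne (congrArg f hab), c, hc, ha, hb⟩

end PrimalGraph

def swiftAtom (X : Finset ℕ) (a : ℕ) : ℕ ⊕ ℕ :=
  if a ∈ X then Sum.inr a else Sum.inl a

lemma proj_swiftAtom (X : Finset ℕ) (a : ℕ) : proj (swiftAtom X a) = a := by
  unfold swiftAtom
  split_ifs <;> rfl

lemma swiftClauses_eq_map_clauseMap (X : Finset ℕ) (R : List (Clause ℕ)) :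
    swiftClauses X R = (R.filter fun c => decide (c.1 ∉ X)).map (clauseMap (swiftAtom X)) := by
  refine List.map_congr_left fun c hc => ?_
  have hhead : c.1 ∉ X := by simpa using (List.mem_filter.mp hc).2
  simp only [clauseMap, swiftAtom, if_neg hhead]
  congr 1
  refine List.map_congr_left fun l _ => ?_
  simp only [Prod.map, swiftAtom, id]
  split_ifs <;> rfl

theorem swift_primal_graph_edge_injective_general (R : List (Clause ℕ))
    (X : Finset ℕ) :
    ∀ u v : ℕ ⊕ ℕ, (primalGraph (swiftClauses X R)).Adj u v →
      proj u ≠ proj v ∧ (primalGraph R).Adj (proj u) (proj v) := by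
  intro u v huv
  rw [swiftClauses_eq_map_clauseMap] at huv
  obtain ⟨a, b, rfl, rfl, hab⟩ := exists_adj_of_primalGraph_map_adj huv
  rw [proj_swiftAtom, proj_swiftAtom]
  have hab' := primalGraph_mono (List.filter_subset_self R) hab
  exact ⟨hab'.ne, hab'⟩

theorem swift_primal_graph_edge_injective (R : List (Clause ℕ)) (F : List (ℕ × ℝ))
    (X : Finset ℕ) (x : ℕ → Bool) :
    ∀ u v : ℕ ⊕ ℕ, (primalGraph (swiftClauses X R)).Adj u v →
      proj u ≠ proj v ∧ (primalGraph R).Adj (proj u) (proj v) :=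
  swift_primal_graph_edge_injective_general R X
end

section
/- Let l : ℕ and π : Fin l → ℝ with 0 ≤ π i for all i, and suppose that for every i, the partial sum ∑_{j < i} π j is strictly less than 1. Define p i := π i / (1 − ∑_{j < i} π j). Then for every i : Fin l, p i · ∏_{j < i} (1 − p j) = π i, and moreover ∏_{j} (1 − p j) = 1 − ∑_{j} π j. (Hence in the ProbLog encoding of an annotated disjunction by a sequence of independent auxiliary facts u_i with probabilities p i, the probability that the first true auxiliary fact is the i-th equals π i, and the probability that all auxiliary facts are false equals 1 − ∑ π j.) -/
open Finset

/-- Stick breaking: `p j` is the fraction that `π j` takes of the mass left over by the indices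
below `j`. -/
theorem Finset.prod_one_sub_eq_one_sub_sum {α R : Type*} [LinearOrder α] [CommRing R]
    (s : Finset α) (π p : α → R)
    (h : ∀ j ∈ s, p j * (1 - ∑ k ∈ s with k < j, π k) = π j) :
    ∏ j ∈ s, (1 - p j) = 1 - ∑ j ∈ s, π j := by
  induction s using Finset.induction_on_max with
  | empty => simp
  | insert a s hlt ih =>
    have ha : a ∉ s := fun has => lt_irrefl a (hlt a has)
    have hfilter_a : ({k ∈ insert a s | k < a} : Finset α) = s := by
      rw [filter_insert, if_neg (lt_irrefl a), filter_true_of_mem hlt]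
    have hfilter_s : ∀ j ∈ s, ({k ∈ insert a s | k < j} : Finset α) = {k ∈ s | k < j} := by
      intro j hj
      rw [filter_insert, if_neg (hlt j hj).not_gt]
    have ih' := ih fun j hj => by
      rw [← hfilter_s j hj]; exact h j (mem_insert_of_mem hj)
    have ha' := h a (mem_insert_self a s)
    rw [hfilter_a] at ha'
    rw [prod_insert ha, sum_insert ha, ih', ← ha']
    ring

theorem riguzzi_problog_encoding_general
    (l : ℕ) (π : Fin l → ℝ)
    (hlt : ∀ i : Fin l, ∑ j ∈ Finset.Iio i, π j < 1)
    (p : Fin l → ℝ)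
    (hp : ∀ i, p i = π i / (1 - ∑ j ∈ Finset.Iio i, π j)) :
    (∀ i : Fin l, p i * ∏ j ∈ Finset.Iio i, (1 - p j) = π i) ∧
    ∏ j, (1 - p j) = 1 - ∑ j, π j := by
  have hshare : ∀ i, p i * (1 - ∑ j ∈ Iio i, π j) = π i := fun i => by
    rw [hp i, div_mul_cancel₀ _ (sub_ne_zero.2 (hlt i).ne')]
  have hprefix : ∀ i, ∏ j ∈ Iio i, (1 - p j) = 1 - ∑ j ∈ Iio i, π j := fun i =>
    prod_one_sub_eq_one_sub_sum _ π p fun j hj => by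
      rw [Iio_filter_lt, min_eq_right (mem_Iio.1 hj).le, hshare]
  refine ⟨fun i => by rw [hprefix, hshare], ?_⟩
  exact prod_one_sub_eq_one_sub_sum _ π p fun j _ => by rw [filter_gt_eq_Iio, hshare]

theorem riguzzi_problog_encoding
    (l : ℕ) (π : Fin l → ℝ) (hnn : ∀ i, 0 ≤ π i)
    (hlt : ∀ i : Fin l, ∑ j ∈ Finset.Iio i, π j < 1)
    (p : Fin l → ℝ)
    (hp : ∀ i, p i = π i / (1 - ∑ j ∈ Finset.Iio i, π j)) :
    (∀ i : Fin l, p i * ∏ j ∈ Finset.Iio i, (1 - p j) = π i) ∧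
    ∏ j, (1 - p j) = 1 - ∑ j, π j :=
  riguzzi_problog_encoding_general l π hlt p hp
end

section
/- Let V be a type of atoms and R a list of clauses over V such that the dependency relation of R (relating a ≺ h iff a is the atom of some body literal of a clause of R with head h) is well-founded. Then for every assignment e : V → Bool there exists a unique assignment f : V → Bool that is a supported model of R extending e; that is, f agrees with e on every external atom, and for every internal atom h, f h = true if and only if some clause (h, B) ∈ R has every literal of B satisfied by f. -/
/-- The dependency relation of a clause list: `Dep R a h` holds iff `a` is the
atom of some body literal of a clause of `R` with head `h`. -/
def Dep {V : Type} (R : List (Clause V)) (a h : V) : Prop :=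
  ∃ c ∈ R, c.1 = h ∧ a ∈ c.2.map Prod.fst

/-- `f` is a supported model of `R` extending `e`: `f` agrees with `e` on every
external atom (atom heading no clause of `R`), and every internal atom `h` is true
under `f` iff some clause with head `h` has all its body literals satisfied by `f`. -/
def IsSupportedModel {V : Type} (R : List (Clause V)) (e f : V → Bool) : Prop :=
  (∀ a : V, (∀ c ∈ R, c.1 ≠ a) → f a = e a) ∧
  (∀ h : V, (∃ c ∈ R, c.1 = h) →
    (f h = true ↔ ∃ c ∈ R, c.1 = h ∧ ∀ l ∈ c.2, f l.1 = l.2))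

/-!
The support condition says that `f` is a fixed point of the one-step operator `supportStep R e`,
whose value at an atom `h` only reads `f` on the atoms `h` depends on. Along a well-founded
relation such a local operator has exactly one fixed point: two fixed points agree at `h` once
they agree below `h`, and a fixed point is built by well-founded recursion.
-/

open Function

section LocalOperator

variable {α β : Type*} {r : α → α → Prop}

theorem WellFounded.eq_of_isFixedPt (hr : WellFounded r) {F : (α → β) → α → β}
    (hF : ∀ f g a, (∀ b, r b a → f b = g b) → F f a = F g a)
    {f g : α → β} (hf : IsFixedPt F f) (hg : IsFixedPt F g) : f = g := by
  funext a
  induction a using hr.induction with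
  | _ a ih => rw [← hf, ← hg]; exact hF f g a ih

theorem WellFounded.exists_isFixedPt [Nonempty β] (hr : WellFounded r) {F : (α → β) → α → β}
    (hF : ∀ f g a, (∀ b, r b a → f b = g b) → F f a = F g a) :
    ∃ f, IsFixedPt F f := by
  classical
  -- below `a` the recursive values are known; elsewhere any value will do, as `F · a` ignores it
  let f := hr.fix fun a rec => F (fun b => if hb : r b a then rec b hb else Classical.arbitrary β) a
  refine ⟨f, funext fun a => ?_⟩
  rw [show f a = _ from hr.fix_eq _ a]
  exact hF _ _ a fun b hb => by rw [dif_pos hb]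

theorem WellFounded.existsUnique_isFixedPt [Nonempty β] (hr : WellFounded r)
    {F : (α → β) → α → β} (hF : ∀ f g a, (∀ b, r b a → f b = g b) → F f a = F g a) :
    ∃! f, IsFixedPt F f :=
  let ⟨f, hf⟩ := hr.exists_isFixedPt hF
  ⟨f, hf, fun _ hg => hr.eq_of_isFixedPt hF hg hf⟩

end LocalOperator

section SupportedModel

variable {V : Type} (R : List (Clause V)) (e : V → Bool)

open Classical in
noncomputable def supportStep (f : V → Bool) (h : V) : Bool :=
  if ∃ c ∈ R, c.1 = h then decide (∃ c ∈ R, c.1 = h ∧ ∀ l ∈ c.2, f l.1 = l.2) else e h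

open Classical in
theorem isSupportedModel_iff_isFixedPt {f : V → Bool} :
    IsSupportedModel R e f ↔ IsFixedPt (supportStep R e) f := by
  have not_internal {h : V} : (¬∃ c ∈ R, c.1 = h) ↔ ∀ c ∈ R, c.1 ≠ h := by
    simp only [not_exists, not_and, ne_eq]
  refine ⟨fun ⟨hext, hint⟩ => funext fun h => ?_, fun hf => ⟨fun a ha => ?_, fun h hh => ?_⟩⟩
  · by_cases hh : ∃ c ∈ R, c.1 = h
    · rw [supportStep, if_pos hh, Bool.eq_iff_iff, decide_eq_true_iff, hint h hh]
    · rw [supportStep, if_neg hh, hext h (not_internal.1 hh)]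
  · rw [← congrFun hf a, supportStep, if_neg (not_internal.2 ha)]
  · rw [← congrFun hf h, supportStep, if_pos hh, decide_eq_true_iff]

theorem supportStep_congr {f g : V → Bool} {h : V} (hfg : ∀ a, Dep R a h → f a = g a) :
    supportStep R e f h = supportStep R e g h := by
  unfold supportStep
  congr 1
  refine decide_eq_decide.2 <| exists_congr fun c =>
    and_congr_right fun hc => and_congr_right fun hch => ?_
  exact forall₂_congr fun l hl => by rw [hfg l.1 ⟨c, hc, hch, List.mem_map_of_mem hl⟩]

end SupportedModel

theorem unique_supported_model {V : Type} (R : List (Clause V))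
    (hwf : WellFounded (Dep R)) (e : V → Bool) :
    ∃! f : V → Bool, IsSupportedModel R e f := by
  simp only [isSupportedModel_iff_isFixedPt]
  exact hwf.existsUnique_isFixedPt fun f g _ => supportStep_congr R e
end

section
/- Let V be a type of atoms, let R and R' be lists of clauses over V whose dependency relations are well-founded, let X : Set V, and suppose that R and R' contain exactly the same clauses with head outside X. Let H denote the set of atoms that are the head of some clause of R with head outside X. If f is a supported model of R extending some e, f' is a supported model of R' extending some e', and f and f' agree on every atom not in H (in particular on all atoms of X and on all atoms external to both programs), then f = f'. -/
/-! Induct along the well-founded dependency relation of `R`. At a head `h ∉ X` of `R` both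
programs have the same clauses for `h`, whose body atoms all lie below `h`; by induction both
models evaluate these bodies alike, hence support `h` alike. Off those heads they agree by
assumption. -/

variable {V : Type}

theorem Dep.of_mem {R : List (Clause V)} {c : Clause V} (hc : c ∈ R) {l : V × Bool}
    (hl : l ∈ c.2) : Dep R l.1 c.1 :=
  ⟨c, hc, rfl, List.mem_map_of_mem hl⟩

theorem body_satisfied_iff_of_eqOn_dep {R : List (Clause V)} {f f' : V → Bool} {c : Clause V}
    (hc : c ∈ R) (hdep : ∀ a, Dep R a c.1 → f a = f' a) :
    (∀ l ∈ c.2, f l.1 = l.2) ↔ ∀ l ∈ c.2, f' l.1 = l.2 :=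
  forall₂_congr fun l hl => by rw [hdep l.1 (Dep.of_mem hc hl)]

theorem IsSupportedModel.apply_eq_of_eqOn_dep {R R' : List (Clause V)} {e e' f f' : V → Bool}
    (hf : IsSupportedModel R e f) (hf' : IsSupportedModel R' e' f') {h : V}
    (hh : ∃ c ∈ R, c.1 = h) (hsame : ∀ c : Clause V, c.1 = h → (c ∈ R ↔ c ∈ R'))
    (hdep : ∀ a, Dep R a h → f a = f' a) : f h = f' h := by
  obtain ⟨c₀, hc₀, hc₀h⟩ := hh
  rw [Bool.eq_iff_iff, hf.2 h ⟨c₀, hc₀, hc₀h⟩, hf'.2 h ⟨c₀, (hsame c₀ hc₀h).1 hc₀, hc₀h⟩]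
  refine exists_congr fun c => ⟨?_, ?_⟩
  · rintro ⟨hc, rfl, hbody⟩
    exact ⟨(hsame c rfl).1 hc, rfl, (body_satisfied_iff_of_eqOn_dep hc hdep).1 hbody⟩
  · rintro ⟨hc', rfl, hbody⟩
    have hc := (hsame c rfl).2 hc'
    exact ⟨hc, rfl, (body_satisfied_iff_of_eqOn_dep hc hdep).2 hbody⟩

theorem supported_model_modularity_general {V : Type} (R R' : List (Clause V))
    (hwf : WellFounded (Dep R))
    (X : Set V)
    (hsame : ∀ c : Clause V, c.1 ∉ X → (c ∈ R ↔ c ∈ R'))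
    (e e' f f' : V → Bool)
    (hf : IsSupportedModel R e f) (hf' : IsSupportedModel R' e' f')
    (hagree : ∀ a : V, a ∉ {h : V | ∃ c ∈ R, c.1 = h ∧ h ∉ X} → f a = f' a) :
    f = f' := by
  funext a
  induction a using hwf.induction with
  | _ h ih =>
    by_cases hH : ∃ c ∈ R, c.1 = h ∧ h ∉ X
    · obtain ⟨c, hc, hch, hX⟩ := hH
      exact hf.apply_eq_of_eqOn_dep hf' ⟨c, hc, hch⟩ (fun d hd => hsame d (hd ▸ hX)) ih
    · exact hagree h hH

theorem supported_model_modularity {V : Type} (R R' : List (Clause V))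
    (hwf : WellFounded (Dep R)) (hwf' : WellFounded (Dep R'))
    (X : Set V)
    (hsame : ∀ c : Clause V, c.1 ∉ X → (c ∈ R ↔ c ∈ R'))
    (e e' f f' : V → Bool)
    (hf : IsSupportedModel R e f) (hf' : IsSupportedModel R' e' f')
    (hagree : ∀ a : V, a ∉ {h : V | ∃ c ∈ R, c.1 = h ∧ h ∉ X} → f a = f' a) :
    f = f' :=
  supported_model_modularity_general R R' hwf X hsame e e' f f' hf hf' hagree
end

section
/- Let P = (R, F) be a ProbLog program over atoms ℕ, X : Finset ℕ an intervention set, R' the sublist of R of clauses with head not in X, and T(P) the Twin Network transformation over atoms ℕ ⊕ ℕ. Suppose the dependency relation of R is well-founded. Then for every assignment e : (ℕ ⊕ ℕ) → Bool, the supported model m of the clause list of T(P) extending e decomposes: the function (fun a => m (Sum.inl a)) is the supported model of R' extending (fun a => e (Sum.inl a)), and the function (fun a => m (Sum.inr a)) is the supported model of R' extending (fun a => e (Sum.inr a)). In particular, because no clause of T(P) mentions both an inl-atom and an inr-atom, the factual and counterfactual halves of the Twin Network program interact only through their shared external assignment. -/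
/-!
The clauses of the twin program with head `inl h` are exactly the `inl`-renamed clauses of `R'`
with head `h`, and their bodies mention only `inl`-atoms; so the support condition at `inl h` in
the twin program is the support condition at `h` in `R'` read through `inl` (and likewise for
`inr`). Restriction of supported models along an injective renaming is therefore all that is needed.
-/

def Clause.rename {V W : Type} (ι : V → W) (c : Clause V) : Clause W :=
  (ι c.1, c.2.map fun l => (ι l.1, l.2))

lemma Clause.rename_body_holds_iff {V W : Type} (ι : V → W) (m : W → Bool) (c : Clause V) :
    (∀ l ∈ (c.rename ι).2, m l.1 = l.2) ↔ ∀ l ∈ c.2, m (ι l.1) = l.2 := by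
  simp only [Clause.rename, List.forall_mem_map]

theorem IsSupportedModel.comp_of_rename {V W : Type} {R : List (Clause V)}
    {S : List (Clause W)} {ι : V → W} (hι : Function.Injective ι)
    (hR : ∀ c ∈ R, c.rename ι ∈ S)
    (hS : ∀ a, ∀ c' ∈ S, c'.1 = ι a → ∃ c ∈ R, c' = c.rename ι)
    {e m : W → Bool} (hm : IsSupportedModel S e m) :
    IsSupportedModel R (fun a => e (ι a)) (fun a => m (ι a)) := by
  obtain ⟨hext, hsupp⟩ := hm
  refine ⟨fun a ha => hext (ι a) fun c' hc' hhead => ?_, fun h ⟨c, hc, hch⟩ => ?_⟩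
  · obtain ⟨c, hc, rfl⟩ := hS a c' hc' hhead
    exact ha c hc (hι hhead)
  · rw [hsupp (ι h) ⟨_, hR c hc, by rw [← hch]; rfl⟩]
    constructor
    · rintro ⟨c', hc', hhead, hbody⟩
      obtain ⟨d, hd, rfl⟩ := hS h c' hc' hhead
      exact ⟨d, hd, hι hhead, (Clause.rename_body_holds_iff ι m d).1 hbody⟩
    · rintro ⟨d, hd, rfl, hbody⟩
      exact ⟨_, hR d hd, rfl, (Clause.rename_body_holds_iff ι m d).2 hbody⟩

section twinClauses

variable {X : Finset ℕ} {R : List (Clause ℕ)}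

lemma mem_twinClauses {c' : Clause (ℕ ⊕ ℕ)} :
    c' ∈ twinClauses X R ↔ ∃ c ∈ R.filter (fun c => decide (c.1 ∉ X)),
      c' = c.rename Sum.inl ∨ c' = c.rename Sum.inr := by
  simp [twinClauses, Clause.rename, List.mem_flatMap]

lemma rename_inl_mem_twinClauses {c : Clause ℕ} (hc : c ∈ R.filter fun c => decide (c.1 ∉ X)) :
    c.rename Sum.inl ∈ twinClauses X R :=
  mem_twinClauses.2 ⟨c, hc, .inl rfl⟩

lemma rename_inr_mem_twinClauses {c : Clause ℕ} (hc : c ∈ R.filter fun c => decide (c.1 ∉ X)) :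
    c.rename Sum.inr ∈ twinClauses X R :=
  mem_twinClauses.2 ⟨c, hc, .inr rfl⟩

lemma exists_rename_inl_of_mem_twinClauses {a : ℕ} {c' : Clause (ℕ ⊕ ℕ)}
    (hc' : c' ∈ twinClauses X R) (hhead : c'.1 = Sum.inl a) :
    ∃ c ∈ R.filter (fun c => decide (c.1 ∉ X)), c' = c.rename Sum.inl := by
  obtain ⟨c, hc, rfl | rfl⟩ := mem_twinClauses.1 hc'
  · exact ⟨c, hc, rfl⟩
  · simp [Clause.rename] at hhead

lemma exists_rename_inr_of_mem_twinClauses {a : ℕ} {c' : Clause (ℕ ⊕ ℕ)}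
    (hc' : c' ∈ twinClauses X R) (hhead : c'.1 = Sum.inr a) :
    ∃ c ∈ R.filter (fun c => decide (c.1 ∉ X)), c' = c.rename Sum.inr := by
  obtain ⟨c, hc, rfl | rfl⟩ := mem_twinClauses.1 hc'
  · simp [Clause.rename] at hhead
  · exact ⟨c, hc, rfl⟩

end twinClauses

theorem twin_network_supported_model_decomposes_general
    (R : List (Clause ℕ)) (X : Finset ℕ)
    (e m : ℕ ⊕ ℕ → Bool)
    (hm : IsSupportedModel (twinClauses X R) e m) :
    IsSupportedModel (R.filter fun c => decide (c.1 ∉ X))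
      (fun a => e (Sum.inl a)) (fun a => m (Sum.inl a)) ∧
    IsSupportedModel (R.filter fun c => decide (c.1 ∉ X))
      (fun a => e (Sum.inr a)) (fun a => m (Sum.inr a)) :=
  ⟨hm.comp_of_rename Sum.inl_injective (fun _ => rename_inl_mem_twinClauses)
      fun _ _ => exists_rename_inl_of_mem_twinClauses,
    hm.comp_of_rename Sum.inr_injective (fun _ => rename_inr_mem_twinClauses)
      fun _ _ => exists_rename_inr_of_mem_twinClauses⟩

theorem twin_network_supported_model_decomposes
    (R : List (Clause ℕ)) (F : List (ℕ × ℝ)) (X : Finset ℕ)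
    (hwf : WellFounded (Dep R))
    (e m : ℕ ⊕ ℕ → Bool)
    (hm : IsSupportedModel (twinClauses X R) e m) :
    IsSupportedModel (R.filter fun c => decide (c.1 ∉ X))
      (fun a => e (Sum.inl a)) (fun a => m (Sum.inl a)) ∧
    IsSupportedModel (R.filter fun c => decide (c.1 ∉ X))
      (fun a => e (Sum.inr a)) (fun a => m (Sum.inr a)) :=
  twin_network_supported_model_decomposes_general R X e m hm
end
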